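/- Irrelevance of unreachable nodes: Let p be a probability profile respecting G, i ∈ N, R ⊆ (N ∪ {s}) ∖ {i}, I ⊆ D_i ∖ R, and let L_1, L_2 ⊆ N ∖ (D_i ∪ R ∪ {i}) be disjoint sets. Then φ[R ∪ L_1, I ∪ L_2 | p, {i}] = φ[R, I | p, {i}]. -/

import Mathlib

/-- The probability `φ[R, I | p, L]` that no node of `L` ever gets infected, in the
epidemic dissemination process on the node set `N`, given that `R` is the set of nodes
infected before the last step, `I` the set of nodes infected in the last step, and
`p` the profile of forwarding probabilities. -/
noncomputable def phi {V : Type*} [Fintype V] [DecidableEq V]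
    (N : Finset V) (p : V → V → ℝ) (L : Finset V) (R I : Finset V) : ℝ :=
  if hI : I = ∅ then 1
  else
    ∑ H ∈ (N \ (R ∪ I ∪ L)).powerset.attach,
      (∏ k ∈ H.1, (1 - ∏ l ∈ I, (1 - p l k))) *
        (∏ k ∈ N \ (H.1 ∪ R ∪ I), ∏ l ∈ I, (1 - p l k)) *
        phi N p L (R ∪ I) H.1
termination_by (Finset.univ \ (R ∪ I)).card * 2 + I.card
decreasing_by
  have hHsub : H.1 ⊆ Finset.univ \ (R ∪ I) := by
    intro x hx
    have hx' := Finset.mem_powerset.mp H.2 hx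
    rw [Finset.mem_sdiff] at hx' ⊢
    exact ⟨Finset.mem_univ x, fun hc => hx'.2 (Finset.mem_union_left _ hc)⟩
  have heq : Finset.univ \ (R ∪ I ∪ H.1) = (Finset.univ \ (R ∪ I)) \ H.1 := by
    ext x
    simp only [Finset.mem_sdiff, Finset.mem_union, Finset.mem_univ, true_and]
    tauto
  have hcard : (Finset.univ \ (R ∪ I ∪ H.1)).card
      = (Finset.univ \ (R ∪ I)).card - H.1.card := by
    rw [heq, Finset.card_sdiff, Finset.inter_eq_left.mpr hHsub]
  have hle : H.1.card ≤ (Finset.univ \ (R ∪ I)).card := Finset.card_le_card hHsub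
  have hpos : 0 < I.card := Finset.card_pos.mpr (Finset.nonempty_iff_ne_empty.mpr hI)
  omega


/-- `IsGPath N G a b n x` : the sequence `x 0 = a, x 1, …, x n = b` (with `n ≥ 1` and
`x 1, …, x n ∈ N`) is a path all of whose consecutive pairs are edges of `G`. -/
def IsGPath {V : Type*} (N : Finset V) (G : V → V → Prop)
    (a b : V) (n : ℕ) (x : ℕ → V) : Prop :=
  1 ≤ n ∧ x 0 = a ∧ x n = b ∧ (∀ r, 1 ≤ r → r ≤ n → x r ∈ N) ∧
    ∀ r < n, G (x r) (x (r + 1))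

open Classical in
/-- `Dset N s G i` : the set of vertices `j ∈ (N ∪ {s}) \ {i}` from which `i` is
reachable by a `G`-path. -/
noncomputable def Dset {V : Type*} [DecidableEq V]
    (N : Finset V) (s : V) (G : V → V → Prop) (i : V) : Finset V :=
  (insert s N).filter fun j => j ≠ i ∧ ∃ n x, IsGPath N G j i n x

/-!
Let `T = D_i ∪ {i}`. No edge enters `T` from outside, so nodes outside `T` never change the
probability `q_k` that a node `k` of `T` escapes infection. Split every newly infected set `H` in
the recursion for `φ` into `H ∩ T` and `H \ T`: the part outside `T` only contributes a factor
`∑_{H' ⊆ S} ∏_{k ∈ H'} (1 - q_k) ∏_{k ∈ S \ H'} q_k = ∏_{k ∈ S} (1 - q_k + q_k) = 1`, and what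
remains is the recursion for `φ` on the node set `N ∩ T`, which no longer sees `L₁` and `L₂`.
By induction along that recursion, `φ_N[R ∪ L₁, I ∪ L₂] = φ_{N ∩ T}[R, I]`; the base case is
that a process whose newly infected nodes all lie outside `T` never reaches the target.
-/

open Finset

theorem Finset.sum_powerset_union_of_disjoint {α β : Type*} [DecidableEq α] [AddCommMonoid β]
    {s t : Finset α} (h : Disjoint s t) (f : Finset α → β) :
    ∑ u ∈ (s ∪ t).powerset, f u = ∑ a ∈ s.powerset, ∑ b ∈ t.powerset, f (a ∪ b) := by
  rw [← sum_product']
  refine sum_nbij' (fun u => (u ∩ s, u ∩ t)) (fun x => x.1 ∪ x.2) ?_ ?_ ?_ ?_ ?_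
  · simp
  · simp only [mem_product, mem_powerset, and_imp, Prod.forall]
    exact fun a b ha hb => union_subset_union ha hb
  · intro u hu
    simp only [← inter_union_distrib_left, inter_eq_left.mpr (mem_powerset.mp hu)]
  · simp only [mem_product, mem_powerset, and_imp, Prod.forall, Prod.mk.injEq]
    intro a b ha hb
    have hst := disjoint_left.mp h
    constructor <;> ext x <;> simp only [mem_inter, mem_union] <;> grind
  · intro u hu
    simp only [← inter_union_distrib_left, inter_eq_left.mpr (mem_powerset.mp hu)]

theorem Finset.sum_powerset_prod_one_sub_mul_prod_sdiff {α R : Type*} [DecidableEq α] [CommRing R]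
    (s : Finset α) (g : α → R) :
    ∑ t ∈ s.powerset, (∏ k ∈ t, (1 - g k)) * ∏ k ∈ s \ t, g k = 1 := by
  simp [← prod_add]

section Phi

variable {V : Type*} {T : Finset V}

def escapeProb (p : V → V → ℝ) (I : Finset V) (k : V) : ℝ := ∏ l ∈ I, (1 - p l k)

theorem escapeProb_eq_one {p : V → V → ℝ} (hT : ∀ l ∉ T, ∀ k ∈ T, p l k = 0) {I : Finset V}
    (hI : Disjoint I T) {k : V} (hk : k ∈ T) : escapeProb p I k = 1 :=
  prod_eq_one fun l hl => by rw [hT l (disjoint_left.mp hI hl) k hk, sub_zero]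

variable [DecidableEq V]

theorem escapeProb_union_eq {p : V → V → ℝ} (hT : ∀ l ∉ T, ∀ k ∈ T, p l k = 0) {I J : Finset V}
    (hI : I ⊆ T) (hJ : Disjoint J T) {k : V} (hk : k ∈ T) :
    escapeProb p (I ∪ J) k = escapeProb p I k := by
  rw [escapeProb, prod_union (hJ.symm.mono_left hI), ← escapeProb, ← escapeProb,
    escapeProb_eq_one hT hJ hk, mul_one]

variable [Fintype V] (N : Finset V) (p : V → V → ℝ) (L : Finset V)

theorem phi_empty (R : Finset V) : phi N p L R ∅ = 1 := by
  rw [phi, dif_pos rfl]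

theorem phi_of_ne_empty {R I : Finset V} (hI : I ≠ ∅) :
    phi N p L R I = ∑ H ∈ (N \ (R ∪ I ∪ L)).powerset,
      (∏ k ∈ H, (1 - escapeProb p I k)) * (∏ k ∈ N \ (H ∪ R ∪ I), escapeProb p I k) *
        phi N p L (R ∪ I) H := by
  rw [phi, dif_neg hI]
  exact sum_attach _ fun H => (∏ k ∈ H, (1 - escapeProb p I k)) *
    (∏ k ∈ N \ (H ∪ R ∪ I), escapeProb p I k) * phi N p L (R ∪ I) H

variable {p}

theorem phi_eq_one_of_disjoint (hLT : L ⊆ T) (hT : ∀ l ∉ T, ∀ k ∈ T, p l k = 0)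
    (R I : Finset V) (hI : Disjoint I T) : phi N p L R I = 1 := by
  induction R, I using phi.induct N L with
  | case1 R => exact phi_empty N p L R
  | case2 R I hne ih =>
    rw [phi_of_ne_empty N p L hne]
    refine (sum_congr rfl fun H hH => ?_).trans
      (sum_powerset_prod_one_sub_mul_prod_sdiff (N \ (R ∪ I ∪ L)) (escapeProb p I))
    by_cases hHT : Disjoint H T
    · rw [ih ⟨H, hH⟩ hHT, mul_one]
      congr 1
      refine (prod_subset (fun k hk => ?_) fun k hk hk' => ?_).symm
      · simp only [mem_sdiff, mem_union] at hk ⊢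
        tauto
      · have hkL : k ∈ L := by
          simp only [mem_sdiff, mem_union] at hk hk'
          tauto
        exact escapeProb_eq_one hT hI (hLT hkL)
    · obtain ⟨k, hkH, hkT⟩ := not_disjoint_iff.mp hHT
      have hk : 1 - escapeProb p I k = 0 := by rw [escapeProb_eq_one hT hI hkT, sub_self]
      rw [prod_eq_zero (f := fun k => 1 - escapeProb p I k) hkH hk, zero_mul, zero_mul, zero_mul]

theorem phi_union_eq_sum_sum (hLT : L ⊆ T) (hT : ∀ l ∉ T, ∀ k ∈ T, p l k = 0)
    {R I L₁ L₂ : Finset V} (hI : I ⊆ T) (hL₁ : Disjoint L₁ T) (hL₂ : Disjoint L₂ T)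
    (hne : I ∪ L₂ ≠ ∅) :
    phi N p L (R ∪ L₁) (I ∪ L₂) = ∑ H ∈ ((N ∩ T) \ (R ∪ I ∪ L)).powerset,
      ∑ Hb ∈ ((N \ (R ∪ L₁ ∪ (I ∪ L₂) ∪ L)) \ T).powerset,
        (∏ k ∈ H, (1 - escapeProb p I k)) * (∏ k ∈ (N ∩ T) \ (H ∪ R ∪ I), escapeProb p I k) *
          ((∏ k ∈ Hb, (1 - escapeProb p (I ∪ L₂) k)) *
            ∏ k ∈ ((N \ (R ∪ L₁ ∪ (I ∪ L₂) ∪ L)) \ T) \ Hb, escapeProb p (I ∪ L₂) k) *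
          phi N p L (R ∪ I ∪ (L₁ ∪ L₂)) (H ∪ Hb) := by
  have h₁ : ∀ k ∈ L₁, k ∉ T := fun _ hk => disjoint_left.mp hL₁ hk
  have h₂ : ∀ k ∈ L₂, k ∉ T := fun _ hk => disjoint_left.mp hL₂ hk
  set Sb := (N \ (R ∪ L₁ ∪ (I ∪ L₂) ∪ L)) \ T
  have hSb : Disjoint (N ∩ T) Sb :=
    disjoint_left.mpr fun k hk hk' => (mem_sdiff.mp hk').2 (mem_inter.mp hk).2
  have hW : N \ (R ∪ L₁ ∪ (I ∪ L₂) ∪ L) = (N ∩ T) \ (R ∪ I ∪ L) ∪ Sb := by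
    ext k
    simp only [Sb, mem_inter, mem_sdiff, mem_union]
    grind
  rw [phi_of_ne_empty N p L hne, hW,
    sum_powerset_union_of_disjoint (hSb.mono_left sdiff_subset)]
  refine sum_congr rfl fun H hH => sum_congr rfl fun Hb hHb => ?_
  have hHT : ∀ k ∈ H, k ∈ T := fun k hk =>
    (mem_inter.mp (mem_sdiff.mp (mem_powerset.mp hH hk)).1).2
  have hHbT : ∀ k ∈ Hb, k ∉ T := fun k hk => (mem_sdiff.mp (mem_powerset.mp hHb hk)).2
  have hQ : N \ (H ∪ Hb ∪ (R ∪ L₁) ∪ (I ∪ L₂)) = (N ∩ T) \ (H ∪ R ∪ I) ∪ Sb \ Hb := by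
    ext k
    have hkSb := @mem_powerset.mp hHb k
    have hkL := @hLT k
    simp only [Sb, mem_inter, mem_sdiff, mem_union] at hkSb ⊢
    grind
  have hP : ∏ k ∈ H, (1 - escapeProb p (I ∪ L₂) k) = ∏ k ∈ H, (1 - escapeProb p I k) :=
    prod_congr rfl fun k hk => by rw [escapeProb_union_eq hT hI hL₂ (hHT k hk)]
  have hQT : ∏ k ∈ (N ∩ T) \ (H ∪ R ∪ I), escapeProb p (I ∪ L₂) k =
      ∏ k ∈ (N ∩ T) \ (H ∪ R ∪ I), escapeProb p I k :=
    prod_congr rfl fun k hk => escapeProb_union_eq hT hI hL₂ (mem_inter.mp (mem_sdiff.mp hk).1).2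
  rw [prod_union (disjoint_left.mpr fun k hk hk' => hHbT k hk' (hHT k hk)), hP, hQ,
    prod_union ((hSb.mono_left sdiff_subset).mono_right sdiff_subset), hQT,
    show R ∪ L₁ ∪ (I ∪ L₂) = R ∪ I ∪ (L₁ ∪ L₂) by ac_rfl]
  ring

theorem phi_union_eq_phi_inter (hLT : L ⊆ T) (hT : ∀ l ∉ T, ∀ k ∈ T, p l k = 0)
    (R I : Finset V) (hI : I ⊆ T) (L₁ L₂ : Finset V) (hL₁ : Disjoint L₁ T)
    (hL₂ : Disjoint L₂ T) : phi N p L (R ∪ L₁) (I ∪ L₂) = phi (N ∩ T) p L R I := by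
  induction R, I using phi.induct (N ∩ T) L generalizing L₁ L₂ with
  | case1 R =>
    rw [empty_union, phi_empty, phi_eq_one_of_disjoint N L hLT hT _ _ hL₂]
  | case2 R I hne ih =>
    rw [phi_union_eq_sum_sum N L hLT hT hI hL₁ hL₂
      (fun h => hne (union_eq_empty.mp h).1), phi_of_ne_empty _ p L hne]
    refine sum_congr rfl fun H hH => ?_
    have hHT : H ⊆ T := fun k hk => (mem_inter.mp (mem_sdiff.mp (mem_powerset.mp hH hk)).1).2
    rw [sum_congr rfl fun Hb hHb => by
        rw [ih ⟨H, hH⟩ hHT _ _ (disjoint_union_left.mpr ⟨hL₁, hL₂⟩)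
          (disjoint_of_subset_left (mem_powerset.mp hHb) sdiff_disjoint)],
      ← sum_mul, ← mul_sum, sum_powerset_prod_one_sub_mul_prod_sdiff, mul_one]

end Phi

section Reachability

variable {V : Type*} {N : Finset V} {G : V → V → Prop} {a b c : V} {n : ℕ} {x : ℕ → V}

theorem isGPath_single (hab : G a b) (hb : b ∈ N) :
    IsGPath N G a b 1 fun r => if r = 0 then a else b := by
  refine ⟨le_rfl, by simp, by simp, fun r hr1 hr2 => ?_, fun r hr => ?_⟩
  · simpa [show r ≠ 0 by omega] using hb
  · simpa [show r = 0 by omega] using hab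

theorem IsGPath.cons (hab : G a b) (hb : b ∈ N) (h : IsGPath N G b c n x) :
    IsGPath N G a c (n + 1) fun r => if r = 0 then a else x (r - 1) := by
  obtain ⟨hn, hx0, hxn, hmem, hadj⟩ := h
  refine ⟨by omega, by simp, by simpa using hxn, fun r hr1 hr2 => ?_, fun r hr => ?_⟩
  · rcases r with _ | _ | r
    · omega
    · simpa [hx0] using hb
    · simpa using hmem (r + 1) (by omega) (by omega)
  · rcases r with _ | r
    · simpa [hx0] using hab
    · simpa using hadj r (by omega)

variable [DecidableEq V] {s i : V}

theorem mem_Dset {j : V} :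
    j ∈ Dset N s G i ↔ j ∈ insert s N ∧ j ≠ i ∧ ∃ n x, IsGPath N G j i n x := by
  simp only [Dset, mem_filter]

theorem mem_Dset_of_adj (hG : ∀ a b, G a b → a ∈ insert s N ∧ b ∈ N) {l k : V} (hlk : G l k)
    (hk : k ∈ insert i (Dset N s G i)) (hl : l ≠ i) : l ∈ Dset N s G i := by
  obtain ⟨hl', hk'⟩ := hG l k hlk
  refine mem_Dset.mpr ⟨hl', hl, ?_⟩
  rcases mem_insert.mp hk with rfl | hk
  · exact ⟨1, _, isGPath_single hlk hk'⟩
  · obtain ⟨-, -, n, x, hx⟩ := mem_Dset.mp hk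
    exact ⟨n + 1, _, hx.cons hlk hk'⟩

end Reachability

theorem unreachable_nodes_irrelevant_general
    {V : Type*} [Fintype V] [DecidableEq V]
    (N : Finset V) (s : V)
    (G : V → V → Prop)
    (hG : ∀ a b, G a b → a ∈ insert s N ∧ b ∈ N)
    (p : V → V → ℝ)
    (hresp : ∀ l k, ¬ G l k → p l k = 0)
    (i : V)
    (R I L1 L2 : Finset V)
    (hI : I ⊆ Dset N s G i \ R)
    (hL1 : L1 ⊆ N \ (Dset N s G i ∪ R ∪ {i}))
    (hL2 : L2 ⊆ N \ (Dset N s G i ∪ R ∪ {i})) :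
    phi N p {i} (R ∪ L1) (I ∪ L2) = phi N p {i} R I := by
  set T := insert i (Dset N s G i)
  have hT : ∀ l ∉ T, ∀ k ∈ T, p l k = 0 := fun l hl k hk => hresp l k fun hlk =>
    hl (mem_insert_of_mem (mem_Dset_of_adj hG hlk hk fun h => hl (h ▸ mem_insert_self _ _)))
  have hdisj : ∀ L' ⊆ N \ (Dset N s G i ∪ R ∪ {i}), Disjoint L' T := fun L' hL' =>
    disjoint_left.mpr fun k hk hkT => by
      have := hL' hk
      simp only [T, mem_sdiff, mem_union, mem_insert, mem_singleton] at this hkT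
      tauto
  have hLT : {i} ⊆ T := singleton_subset_iff.mpr (mem_insert_self _ _)
  have hIT : I ⊆ T := hI.trans (sdiff_subset.trans (subset_insert _ _))
  rw [phi_union_eq_phi_inter N {i} hLT hT R I hIT L1 L2 (hdisj L1 hL1) (hdisj L2 hL2),
    ← phi_union_eq_phi_inter N {i} hLT hT R I hIT ∅ ∅ (disjoint_empty_left T)
      (disjoint_empty_left T), union_empty, union_empty]

/-- **Irrelevance of unreachable nodes.**  If `R ⊆ (N ∪ {s}) \ {i}`, `I ⊆ D_i \ R` and
`L₁, L₂` are disjoint subsets of `N \ (D_i ∪ R ∪ {i})`, then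
`φ[R ∪ L₁, I ∪ L₂ | p, {i}] = φ[R, I | p, {i}]`. -/
theorem unreachable_nodes_irrelevant
    {V : Type*} [Fintype V] [DecidableEq V]
    (N : Finset V) (s : V) (hs : s ∉ N)
    (G : V → V → Prop)
    (hG : ∀ a b, G a b → a ∈ insert s N ∧ b ∈ N)
    (p : V → V → ℝ)
    (hp : ∀ l ∈ insert s N, ∀ k ∈ N, 0 ≤ p l k ∧ p l k ≤ 1)
    (hresp : ∀ l k, ¬ G l k → p l k = 0)
    (i : V) (hi : i ∈ N)
    (R I L1 L2 : Finset V)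
    (hR : R ⊆ (insert s N).erase i)
    (hI : I ⊆ Dset N s G i \ R)
    (hL1 : L1 ⊆ N \ (Dset N s G i ∪ R ∪ {i}))
    (hL2 : L2 ⊆ N \ (Dset N s G i ∪ R ∪ {i}))
    (hdisj : Disjoint L1 L2) :
    phi N p {i} (R ∪ L1) (I ∪ L2) = phi N p {i} R I :=
  unreachable_nodes_irrelevant_general N s G hG p hresp i R I L1 L2 hI hL1 hL2
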